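/- For every finite set of 'triple point conditions' given by a set S of triples over index sets Fin(a-1) × Fin(b-1) × Fin(c-1) that is realizable by nonzero complex numbers α_i, β_j, γ_k (all α's distinct, all β's distinct, all γ's distinct) via α_i β_j γ_k = 1 ⇔ (i,j,k) ∈ S, there exists an integer n and a primitive n-th root of unity ζ and natural number exponents ā_i, b̄_j, c̄_k such that ζ^{ā_i}, ζ^{b̄_j}, ζ^{c̄_k} also realize S, with all ζ^{ā_i} distinct, all ζ^{b̄_j} distinct, all ζ^{c̄_k} distinct. -/

import Mathlib

open Polynomial

lemma aux_exists_eval_ne_zero {d : ℕ} {κ : Type*} (F : Finset κ) (cf : κ → Fin d → ℚ)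
    (hc : ∀ t ∈ F, cf t ≠ 0) :
    ∃ x : ℚ, ∀ t ∈ F, (∑ e : Fin d, cf t e * x ^ (e : ℕ)) ≠ 0 := by
  classical
  set P : κ → ℚ[X] := fun t => ∑ e : Fin d, Polynomial.C (cf t e) * X ^ (e : ℕ) with hP
  have hPne : ∀ t ∈ F, P t ≠ 0 := by
    intro t ht
    obtain ⟨e₀, he₀⟩ := Function.ne_iff.mp (hc t ht)
    intro h0
    apply he₀
    have := congrArg (fun p => Polynomial.coeff p (e₀ : ℕ)) h0
    simp only [hP, Polynomial.finset_sum_coeff, Polynomial.coeff_C_mul,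
      Polynomial.coeff_X_pow, Polynomial.coeff_zero, mul_ite, mul_one, mul_zero,
      Fin.val_eq_val, eq_comm] at this
    rw [Finset.sum_ite_eq, if_pos (Finset.mem_univ e₀)] at this
    simpa using this.symm
  have hprod : (∏ t ∈ F, P t) ≠ 0 := Finset.prod_ne_zero_iff.mpr hPne
  have hfin := Polynomial.finite_setOf_isRoot hprod
  obtain ⟨x, hx⟩ := (hfin.infinite_compl).nonempty
  refine ⟨x, fun t ht => ?_⟩
  have : Polynomial.eval x (∏ t ∈ F, P t) ≠ 0 := fun h => hx h
  rw [Polynomial.eval_prod, Finset.prod_ne_zero_iff] at this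
  have := this t ht
  simpa [hP, Polynomial.eval_finset_sum] using this

lemma aux_mul_den (q : ℚ) (D : ℕ) (h : q.den ∣ D) : ∃ z : ℤ, (q * D : ℚ) = z := by
  obtain ⟨k, hk⟩ := h
  refine ⟨q.num * k, ?_⟩
  have hden : (q.den : ℚ) ≠ 0 := Nat.cast_ne_zero.mpr q.den_nz
  have h1 : (q * q.den : ℚ) = q.num := ((div_eq_iff hden).mp (Rat.num_div_den q)).symm
  rw [hk]
  push_cast
  rw [← mul_assoc, h1]

lemma aux_exists_rat_linearMap (T : Finset ℂ) (hT : ∀ t ∈ T, ¬∃ z : ℤ, t = (z : ℂ)) :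
    ∃ f : ℂ →ₗ[ℚ] ℚ, f 1 = 1 ∧ ∀ t ∈ T, ¬∃ z : ℤ, f t = (z : ℚ) := by
  classical
  have hli : LinearIndepOn ℚ id ({1} : Set ℂ) := by
    apply (linearIndepOn_singleton_iff ℚ).mpr
    simp
  let J := hli.extend (Set.subset_univ _)
  let b : Module.Basis J ℚ ℂ := Module.Basis.extend hli
  have h1J : (1 : ℂ) ∈ J := hli.subset_extend _ rfl
  let i₁ : J := ⟨1, h1J⟩
  have hb1 : b i₁ = 1 := Module.Basis.extend_apply_self hli i₁
  -- the relevant index set besides i₁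
  let E : Finset J := (T.biUnion fun t => (b.repr t).support).erase i₁
  let d := E.card
  let σ : {x // x ∈ E} ≃ Fin d := E.equivFin
  -- the "irrational" elements of T
  let TB : Finset ℂ := T.filter (fun t => ¬ (b.repr t).support ⊆ {i₁})
  let cf : ℂ → Fin d → ℚ := fun t m => b.repr t (σ.symm m)
  have hcfne : ∀ t ∈ TB, cf t ≠ 0 := by
    intro t ht
    obtain ⟨htT, hns⟩ := Finset.mem_filter.mp ht
    obtain ⟨i, hisupp, hine⟩ := Finset.not_subset.mp hns
    have hiE : i ∈ E := Finset.mem_erase.mpr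
      ⟨by simpa using hine, Finset.mem_biUnion.mpr ⟨t, htT, hisupp⟩⟩
    apply Function.ne_iff.mpr
    refine ⟨σ ⟨i, hiE⟩, ?_⟩
    have : σ.symm (σ ⟨i, hiE⟩) = ⟨i, hiE⟩ := σ.symm_apply_apply _
    simp only [cf, this]
    simpa using Finsupp.mem_support_iff.mp hisupp
  obtain ⟨x, hx⟩ := aux_exists_eval_ne_zero TB cf hcfne
  let L : ℂ → ℚ := fun t => ∑ m : Fin d, cf t m * x ^ (m : ℕ)
  let D : ℕ := ∏ t ∈ TB, ((b.repr t i₁).den * (L t).den)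
  have hD0 : D ≠ 0 := by
    apply Finset.prod_ne_zero_iff.mpr
    intro t _
    exact Nat.mul_ne_zero (b.repr t i₁).den_nz (L t).den_nz
  have hDQ : (D : ℚ) ≠ 0 := Nat.cast_ne_zero.mpr hD0
  let N : ℕ := TB.sup fun t => (L t * D).num.natAbs
  obtain ⟨p, hpN, hp⟩ := Nat.exists_infinite_primes (N + 1)
  have hpQ : (p : ℚ) ≠ 0 := Nat.cast_ne_zero.mpr hp.ne_zero
  let g : J → ℚ := fun i =>
    if i = i₁ then 1 else if h : i ∈ E then x ^ ((σ ⟨i, h⟩ : Fin d) : ℕ) / p else 0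
  let f : ℂ →ₗ[ℚ] ℚ := b.constr ℚ g
  have hgi₁ : g i₁ = 1 := if_pos rfl
  have hf1 : f 1 = 1 := by
    have := b.constr_basis ℚ g i₁
    rwa [hb1, hgi₁] at this
  refine ⟨f, hf1, ?_⟩
  rintro t ht ⟨z, hz⟩
  have hft : f t = (b.repr t).sum fun i a => a • g i := b.constr_apply ℚ g t
  by_cases hsupp : (b.repr t).support ⊆ {i₁}
  · -- rational case
    have hrep : b.repr t = Finsupp.single i₁ (b.repr t i₁) :=
      Finsupp.support_subset_singleton.mp hsupp
    have htq : t = ((b.repr t i₁ : ℚ) : ℂ) := by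
      conv_lhs => rw [← b.linearCombination_repr t]
      rw [hrep, Finsupp.linearCombination_single, hb1, Rat.smul_one_eq_cast]
      simp
    have hfq : f t = b.repr t i₁ := by
      rw [hft, hrep, Finsupp.sum_single_index (by simp), hgi₁, smul_eq_mul, mul_one]
      simp
    apply hT t ht
    refine ⟨z, ?_⟩
    rw [htq, hfq.symm.trans hz]
    push_cast
    rfl
  · -- irrational case
    have htB : t ∈ TB := Finset.mem_filter.mpr ⟨ht, hsupp⟩
    -- compute f t = c₁ + L t / p
    set c₁ : ℚ := b.repr t i₁ with hc₁
    have hcompute : f t = c₁ + L t / p := by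
      have hstep : ∑ i ∈ (b.repr t).support, (b.repr t) i • g i
          = ∑ i ∈ insert i₁ (b.repr t).support, (b.repr t) i • g i :=
        Finset.sum_subset (Finset.subset_insert _ _) (fun i _ hi => by
          rw [Finsupp.notMem_support_iff.mp hi, zero_smul])
      rw [hft, Finsupp.sum, hstep,
        ← Finset.add_sum_erase _ _ (Finset.mem_insert_self i₁ (b.repr t).support),
        Finset.erase_insert_eq_erase]
      congr 1
      · rw [hgi₁, smul_eq_mul, mul_one]
      · -- sum over erase = L t / p
        have hsub : (b.repr t).support.erase i₁ ⊆ E := by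
          intro i hi
          obtain ⟨hine, hisupp⟩ := Finset.mem_erase.mp hi
          exact Finset.mem_erase.mpr ⟨hine, Finset.mem_biUnion.mpr ⟨t, ht, hisupp⟩⟩
        rw [Finset.sum_subset hsub (by
          intro i hiE hins
          have hine : i ≠ i₁ := (Finset.mem_erase.mp hiE).1
          have : i ∉ (b.repr t).support := fun hin =>
            hins (Finset.mem_erase.mpr ⟨hine, hin⟩)
          rw [Finsupp.notMem_support_iff.mp this, zero_smul])]
        rw [← Finset.sum_coe_sort E (fun i => b.repr t i • g i)]
        rw [← Equiv.sum_comp σ.symm (fun i : {x // x ∈ E} => b.repr t (i : J) • g (i : J))]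
        rw [Finset.sum_div]
        apply Finset.sum_congr rfl
        intro m _
        have hmem : ((σ.symm m : {x // x ∈ E}) : J) ∈ E := (σ.symm m).2
        have hne : ((σ.symm m : {x // x ∈ E}) : J) ≠ i₁ := (Finset.mem_erase.mp hmem).1
        have hgval : g ((σ.symm m : {x // x ∈ E}) : J) = x ^ (m : ℕ) / p := by
          simp only [g, if_neg hne, dif_pos hmem]
          congr 2
          have : (⟨((σ.symm m : {x // x ∈ E}) : J), hmem⟩ : {x // x ∈ E}) = σ.symm m :=
            Subtype.ext rfl
          rw [this, σ.apply_symm_apply]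
        rw [hgval, smul_eq_mul]
        simp only [cf]
        ring
    -- divisibility setup
    have hdvd1 : c₁.den ∣ D :=
      (dvd_mul_right c₁.den (L t).den).trans
        (Finset.dvd_prod_of_mem (fun s => ((b.repr s) i₁).den * (L s).den) htB)
    have hdvd2 : (L t).den ∣ D :=
      (dvd_mul_left (L t).den ((b.repr t) i₁).den).trans
        (Finset.dvd_prod_of_mem (fun s => ((b.repr s) i₁).den * (L s).den) htB)
    obtain ⟨M, hM⟩ := aux_mul_den c₁ D hdvd1
    obtain ⟨Sz, hSz⟩ := aux_mul_den (L t) D hdvd2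
    -- the integer equation
    have heq : c₁ + L t / p = (z : ℚ) := by rw [← hcompute, hz]
    have heq' : c₁ * p + L t = z * p := by
      field_simp at heq
      linarith [heq]
    have heqZ : M * p + Sz = z * D * p := by
      have : ((M * p + Sz : ℤ) : ℚ) = ((z * D * p : ℤ) : ℚ) := by
        push_cast
        rw [← hM, ← hSz]
        linear_combination (D : ℚ) * heq'
      exact_mod_cast this
    have hpdvd : (p : ℤ) ∣ Sz := ⟨z * D - M, by linarith [heqZ]⟩
    have hSz0 : Sz ≠ 0 := by
      intro h0
      apply mul_ne_zero (hx t htB) hDQ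
      show L t * (D : ℚ) = 0
      rw [hSz, h0]
      norm_num
    have hple : p ≤ Sz.natAbs := by
      apply Nat.le_of_dvd (Int.natAbs_pos.mpr hSz0)
      rw [← Int.natAbs_natCast p]
      exact Int.natAbs_dvd_natAbs.mpr hpdvd
    have hSzN : Sz.natAbs ≤ N := by
      have hnum : (L t * (D : ℚ)).num = Sz := by rw [hSz, Rat.num_intCast]
      have hle := Finset.le_sup (f := fun s => (L s * (D : ℚ)).num.natAbs) htB
      rwa [hnum] at hle
    omega


lemma aux_dvd_iff (n : ℕ) (hn : n ≠ 0) (r : ℚ) (Z : ℤ) (hZ : (r * n : ℚ) = Z) :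
    (n : ℤ) ∣ Z ↔ ∃ z : ℤ, r = (z : ℚ) := by
  have hnQ : (n : ℚ) ≠ 0 := Nat.cast_ne_zero.mpr hn
  constructor
  · rintro ⟨z, hz⟩
    refine ⟨z, ?_⟩
    have : (r * n : ℚ) = z * n := by rw [hZ, hz]; push_cast; ring
    exact mul_right_cancel₀ hnQ this
  · rintro ⟨z, hz⟩
    refine ⟨z, ?_⟩
    have : ((Z : ℚ)) = ((n * z : ℤ) : ℚ) := by rw [← hZ, hz]; push_cast; ring
    exact_mod_cast this

lemma aux_mod_sum_dvd (n : ℕ) (X Y W : ℤ) :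
    (n : ℤ) ∣ (X % n + Y % n + W % n) ↔ (n : ℤ) ∣ (X + Y + W) := by
  have h1 : X % (n : ℤ) ≡ X [ZMOD (n : ℤ)] := Int.emod_emod_of_dvd _ dvd_rfl
  have h2 : Y % (n : ℤ) ≡ Y [ZMOD (n : ℤ)] := Int.emod_emod_of_dvd _ dvd_rfl
  have h3 : W % (n : ℤ) ≡ W [ZMOD (n : ℤ)] := Int.emod_emod_of_dvd _ dvd_rfl
  rw [← Int.modEq_zero_iff_dvd, ← Int.modEq_zero_iff_dvd]
  constructor
  · intro h; exact (((h1.add h2).add h3).symm.trans h)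
  · intro h; exact (((h1.add h2).add h3).trans h)

/-- Every combinatorics of a triangular arrangement (encoded by the set `S` of
triples of inner lines meeting at an inner triple point) that is realizable over ℂ
is realized by a Roots-of-Unity-Arrangement: the coefficients can be chosen to be
powers of a primitive `n`-th root of unity for some `n`. -/
theorem stmt_13 (a b c : ℕ) (S : Set (Fin (a - 1) × Fin (b - 1) × Fin (c - 1)))
    (α : Fin (a - 1) → ℂˣ) (hα : Function.Injective α)
    (β : Fin (b - 1) → ℂˣ) (hβ : Function.Injective β)
    (γ : Fin (c - 1) → ℂˣ) (hγ : Function.Injective γ)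
    (hS : ∀ i j k, α i * β j * γ k = 1 ↔ (i, j, k) ∈ S) :
    ∃ (n : ℕ) (ζ : ℂ), IsPrimitiveRoot ζ n ∧
      ∃ (A : Fin (a - 1) → ℕ) (B : Fin (b - 1) → ℕ) (C : Fin (c - 1) → ℕ),
        Function.Injective (fun i => ζ ^ A i) ∧
        Function.Injective (fun j => ζ ^ B j) ∧
        Function.Injective (fun k => ζ ^ C k) ∧
        ∀ i j k, ζ ^ A i * ζ ^ B j * ζ ^ C k = 1 ↔ (i, j, k) ∈ S := by
  classical
  set cc : ℂ := 2 * Real.pi * Complex.I with hcc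
  have hcc0 : cc ≠ 0 := by
    rw [hcc]
    refine mul_ne_zero (mul_ne_zero two_ne_zero ?_) Complex.I_ne_zero
    exact_mod_cast Real.pi_ne_zero
  have hexp1 : ∀ θ : ℂ, Complex.exp (cc * θ) = 1 ↔ ∃ z : ℤ, θ = (z : ℂ) := by
    intro θ
    rw [Complex.exp_eq_one_iff]
    constructor
    · rintro ⟨m, hm⟩
      refine ⟨m, mul_left_cancel₀ hcc0 ?_⟩
      rw [hm, hcc]; ring
    · rintro ⟨m, hm⟩
      exact ⟨m, by rw [hm, hcc]; ring⟩
  -- logarithms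
  set u : Fin (a - 1) → ℂ := fun i => Complex.log (α i) / cc with hu'
  set v : Fin (b - 1) → ℂ := fun j => Complex.log (β j) / cc with hv'
  set w : Fin (c - 1) → ℂ := fun k => Complex.log (γ k) / cc with hw'
  have hu : ∀ i, Complex.exp (cc * u i) = (α i : ℂ) := fun i => by
    rw [hu', mul_div_cancel₀ _ hcc0]; exact Complex.exp_log (Units.ne_zero (α i))
  have hv : ∀ j, Complex.exp (cc * v j) = (β j : ℂ) := fun j => by
    rw [hv', mul_div_cancel₀ _ hcc0]; exact Complex.exp_log (Units.ne_zero (β j))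
  have hw : ∀ k, Complex.exp (cc * w k) = (γ k : ℂ) := fun k => by
    rw [hw', mul_div_cancel₀ _ hcc0]; exact Complex.exp_log (Units.ne_zero (γ k))
  have hsum : ∀ i j k, ((i, j, k) ∈ S ↔ ∃ z : ℤ, u i + v j + w k = (z : ℂ)) := by
    intro i j k
    rw [← hS i j k, ← hexp1]
    rw [mul_add, mul_add, Complex.exp_add, Complex.exp_add, hu, hv, hw]
    simp [Units.ext_iff]
  -- distinctness of logs mod ℤ
  have key : ∀ {m : ℕ} (δ : Fin m → ℂˣ) (uu : Fin m → ℂ),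
      Function.Injective δ → (∀ i, Complex.exp (cc * uu i) = (δ i : ℂ)) →
      ∀ i i', i ≠ i' → ¬∃ z : ℤ, uu i - uu i' = (z : ℂ) := by
    rintro m δ uu hinj hrep i i' hne ⟨z, hz⟩
    apply hne
    apply hinj
    have h1 : Complex.exp (cc * (uu i - uu i')) = 1 := (hexp1 _).mpr ⟨z, hz⟩
    rw [mul_sub, Complex.exp_sub, hrep, hrep,
      div_eq_one_iff_eq (Units.ne_zero (δ i'))] at h1
    exact Units.ext h1
  have hdu := key α u hα hu
  have hdv := key β v hβ hv
  have hdw := key γ w hγ hw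
  -- the finite set of non-integers
  set T : Finset ℂ :=
    ((Finset.univ.filter fun q : Fin (a - 1) × Fin (b - 1) × Fin (c - 1) =>
        (q.1, q.2.1, q.2.2) ∉ S).image fun q => u q.1 + v q.2.1 + w q.2.2)
    ∪ ((Finset.univ.filter fun q : Fin (a - 1) × Fin (a - 1) => q.1 ≠ q.2).image
        fun q => u q.1 - u q.2)
    ∪ ((Finset.univ.filter fun q : Fin (b - 1) × Fin (b - 1) => q.1 ≠ q.2).image
        fun q => v q.1 - v q.2)
    ∪ ((Finset.univ.filter fun q : Fin (c - 1) × Fin (c - 1) => q.1 ≠ q.2).image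
        fun q => w q.1 - w q.2) with hT'
  have hT : ∀ t ∈ T, ¬∃ z : ℤ, t = (z : ℂ) := by
    intro t ht
    simp only [hT', Finset.mem_union, Finset.mem_image, Finset.mem_filter,
      Finset.mem_univ, true_and] at ht
    rcases ht with ((⟨q, hq, rfl⟩ | ⟨q, hq, rfl⟩) | ⟨q, hq, rfl⟩) | ⟨q, hq, rfl⟩
    · intro hz; exact hq ((hsum q.1 q.2.1 q.2.2).mpr hz)
    · exact hdu q.1 q.2 hq
    · exact hdv q.1 q.2 hq
    · exact hdw q.1 q.2 hq
  obtain ⟨f, hf1, hf⟩ := aux_exists_rat_linearMap T hT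
  have hfint : ∀ z : ℤ, f ((z : ℂ)) = (z : ℚ) := by
    intro z
    have h1 : ((z : ℂ)) = ((z : ℚ)) • (1 : ℂ) := by
      rw [Rat.smul_one_eq_cast]; push_cast; ring
    rw [h1, map_smul, hf1, smul_eq_mul, mul_one]
  -- the common denominator
  set n : ℕ := (∏ i, (f (u i)).den) * (∏ j, (f (v j)).den) * (∏ k, (f (w k)).den) with hn'
  have hn0 : n ≠ 0 := by
    refine Nat.mul_ne_zero (Nat.mul_ne_zero ?_ ?_) ?_ <;>
      exact Finset.prod_ne_zero_iff.mpr fun i _ => (Rat.den_nz _)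
  have hnQ : (n : ℚ) ≠ 0 := Nat.cast_ne_zero.mpr hn0
  have hdu' : ∀ i, (f (u i)).den ∣ n := fun i =>
    dvd_mul_of_dvd_left (dvd_mul_of_dvd_left (Finset.dvd_prod_of_mem _ (Finset.mem_univ i)) _) _
  have hdv' : ∀ j, (f (v j)).den ∣ n := fun j =>
    dvd_mul_of_dvd_left (dvd_mul_of_dvd_right (Finset.dvd_prod_of_mem _ (Finset.mem_univ j)) _) _
  have hdw' : ∀ k, (f (w k)).den ∣ n := fun k =>
    dvd_mul_of_dvd_right (Finset.dvd_prod_of_mem _ (Finset.mem_univ k)) _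
  choose Zu hZu using fun i => aux_mul_den (f (u i)) n (hdu' i)
  choose Zv hZv using fun j => aux_mul_den (f (v j)) n (hdv' j)
  choose Zw hZw using fun k => aux_mul_den (f (w k)) n (hdw' k)
  -- the root of unity
  refine ⟨n, Complex.exp (2 * Real.pi * Complex.I / n), Complex.isPrimitiveRoot_exp n hn0, ?_⟩
  set ζ : ℂ := Complex.exp (2 * Real.pi * Complex.I / n) with hζ
  have hprim : IsPrimitiveRoot ζ n := Complex.isPrimitiveRoot_exp n hn0
  have hnpos : (0 : ℤ) < (n : ℤ) := by exact_mod_cast Nat.pos_of_ne_zero hn0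
  set A : Fin (a - 1) → ℕ := fun i => ((Zu i) % (n : ℤ)).toNat with hA'
  set B : Fin (b - 1) → ℕ := fun j => ((Zv j) % (n : ℤ)).toNat with hB'
  set C : Fin (c - 1) → ℕ := fun k => ((Zw k) % (n : ℤ)).toNat with hC'
  have hAcast : ∀ i, ((A i : ℤ)) = Zu i % n := fun i =>
    Int.toNat_of_nonneg (Int.emod_nonneg _ hnpos.ne')
  have hBcast : ∀ j, ((B j : ℤ)) = Zv j % n := fun j =>
    Int.toNat_of_nonneg (Int.emod_nonneg _ hnpos.ne')
  have hCcast : ∀ k, ((C k : ℤ)) = Zw k % n := fun k =>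
    Int.toNat_of_nonneg (Int.emod_nonneg _ hnpos.ne')
  have hAlt : ∀ i, A i < n := fun i => by
    have h1 : Zu i % (n : ℤ) < n := Int.emod_lt_of_pos _ hnpos
    have h2 := hAcast i
    omega
  have hBlt : ∀ j, B j < n := fun j => by
    have h1 : Zv j % (n : ℤ) < n := Int.emod_lt_of_pos _ hnpos
    have h2 := hBcast j
    omega
  have hClt : ∀ k, C k < n := fun k => by
    have h1 : Zw k % (n : ℤ) < n := Int.emod_lt_of_pos _ hnpos
    have h2 := hCcast k
    omega
  -- membership lemmas for T
  have hmemT1 : ∀ i j k, (i, j, k) ∉ S → u i + v j + w k ∈ T := by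
    intro i j k hns
    simp only [hT', Finset.mem_union, Finset.mem_image, Finset.mem_filter,
      Finset.mem_univ, true_and]
    exact Or.inl (Or.inl (Or.inl ⟨(i, j, k), hns, rfl⟩))
  have hmemT2 : ∀ i i', i ≠ i' → u i - u i' ∈ T := by
    intro i i' hne
    simp only [hT', Finset.mem_union, Finset.mem_image, Finset.mem_filter,
      Finset.mem_univ, true_and]
    exact Or.inl (Or.inl (Or.inr ⟨(i, i'), hne, rfl⟩))
  have hmemT3 : ∀ j j', j ≠ j' → v j - v j' ∈ T := by
    intro j j' hne
    simp only [hT', Finset.mem_union, Finset.mem_image, Finset.mem_filter,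
      Finset.mem_univ, true_and]
    exact Or.inl (Or.inr ⟨(j, j'), hne, rfl⟩)
  have hmemT4 : ∀ k k', k ≠ k' → w k - w k' ∈ T := by
    intro k k' hne
    simp only [hT', Finset.mem_union, Finset.mem_image, Finset.mem_filter,
      Finset.mem_univ, true_and]
    exact Or.inr ⟨(k, k'), hne, rfl⟩
  refine ⟨A, B, C, ?_, ?_, ?_, ?_⟩
  · -- injectivity for A
    intro i i' h
    have hAe : A i = A i' := hprim.pow_inj (hAlt i) (hAlt i') h
    by_contra hne
    have hmod : Zu i % (n : ℤ) = Zu i' % (n : ℤ) := by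
      have := congrArg (fun t : ℕ => (t : ℤ)) hAe
      simpa [hAcast i, hAcast i'] using this
    have hdvd : (n : ℤ) ∣ Zu i' - Zu i := Int.ModEq.dvd hmod
    obtain ⟨z, hz⟩ := (aux_dvd_iff n hn0 (f (u i') - f (u i)) (Zu i' - Zu i)
      (by push_cast; rw [← hZu i', ← hZu i]; ring)).mp hdvd
    refine hf (u i' - u i) (hmemT2 i' i (fun h' => hne h'.symm)) ⟨z, ?_⟩
    rw [map_sub, hz]
  · -- injectivity for B
    intro j j' h
    have hBe : B j = B j' := hprim.pow_inj (hBlt j) (hBlt j') h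
    by_contra hne
    have hmod : Zv j % (n : ℤ) = Zv j' % (n : ℤ) := by
      have := congrArg (fun t : ℕ => (t : ℤ)) hBe
      simpa [hBcast j, hBcast j'] using this
    have hdvd : (n : ℤ) ∣ Zv j' - Zv j := Int.ModEq.dvd hmod
    obtain ⟨z, hz⟩ := (aux_dvd_iff n hn0 (f (v j') - f (v j)) (Zv j' - Zv j)
      (by push_cast; rw [← hZv j', ← hZv j]; ring)).mp hdvd
    refine hf (v j' - v j) (hmemT3 j' j (fun h' => hne h'.symm)) ⟨z, ?_⟩
    rw [map_sub, hz]
  · -- injectivity for C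
    intro k k' h
    have hCe : C k = C k' := hprim.pow_inj (hClt k) (hClt k') h
    by_contra hne
    have hmod : Zw k % (n : ℤ) = Zw k' % (n : ℤ) := by
      have := congrArg (fun t : ℕ => (t : ℤ)) hCe
      simpa [hCcast k, hCcast k'] using this
    have hdvd : (n : ℤ) ∣ Zw k' - Zw k := Int.ModEq.dvd hmod
    obtain ⟨z, hz⟩ := (aux_dvd_iff n hn0 (f (w k') - f (w k)) (Zw k' - Zw k)
      (by push_cast; rw [← hZw k', ← hZw k]; ring)).mp hdvd
    refine hf (w k' - w k) (hmemT4 k' k (fun h' => hne h'.symm)) ⟨z, ?_⟩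
    rw [map_sub, hz]
  · -- the triple point conditions
    intro i j k
    have hZsum : ((f (u i) + f (v j) + f (w k)) * (n : ℚ)) = ((Zu i + Zv j + Zw k : ℤ) : ℚ) := by
      push_cast
      rw [← hZu i, ← hZv j, ← hZw k]
      ring
    constructor
    · intro h1
      by_contra hns
      rw [← pow_add, ← pow_add, hprim.pow_eq_one_iff_dvd] at h1
      have h2 : (n : ℤ) ∣ ((A i + B j + C k : ℕ) : ℤ) := Int.natCast_dvd_natCast.mpr h1
      have h3 : (n : ℤ) ∣ Zu i % n + Zv j % n + Zw k % n := by
        rw [← hAcast i, ← hBcast j, ← hCcast k]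
        exact_mod_cast h2
      have h4 : (n : ℤ) ∣ Zu i + Zv j + Zw k := (aux_mod_sum_dvd n _ _ _).mp h3
      obtain ⟨z, hz⟩ := (aux_dvd_iff n hn0 _ _ hZsum).mp h4
      refine hf (u i + v j + w k) (hmemT1 i j k hns) ⟨z, ?_⟩
      rw [map_add, map_add, hz]
    · intro hmem
      obtain ⟨z, hz⟩ := (hsum i j k).mp hmem
      have hfz : f (u i) + f (v j) + f (w k) = (z : ℚ) := by
        rw [← map_add, ← map_add, hz, hfint]
      have h4 : (n : ℤ) ∣ Zu i + Zv j + Zw k := (aux_dvd_iff n hn0 _ _ hZsum).mpr ⟨z, hfz⟩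
      rw [← pow_add, ← pow_add, hprim.pow_eq_one_iff_dvd]
      have h3 : (n : ℤ) ∣ Zu i % n + Zv j % n + Zw k % n := (aux_mod_sum_dvd n _ _ _).mpr h4
      have h2 : (n : ℤ) ∣ ((A i + B j + C k : ℕ) : ℤ) := by
        push_cast
        rw [hAcast i, hBcast j, hCcast k]
        exact h3
      exact_mod_cast h2
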